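/- arXiv:1810.12381 — 10 statements merged into one kernel-verified Lean document; each statement's English description precedes it below -/
import Mathlib

section
/- Let I ⊆ ℝ be a set satisfying the descending chain condition. Then its closure Ī = I ∪ ∂I in ℝ also satisfies the descending chain condition. -/
open Filter

/-- A set of reals satisfies the descending chain condition (DCC) if it contains
no infinite strictly decreasing sequence. -/
def DCC (S : Set ℝ) : Prop := ¬ ∃ f : ℕ → ℝ, StrictAnti f ∧ ∀ n, f n ∈ S

/-- A set of reals satisfies the ascending chain condition (ACC) if it contains
no infinite strictly increasing sequence. -/
def ACC (S : Set ℝ) : Prop := ¬ ∃ f : ℕ → ℝ, StrictMono f ∧ ∀ n, f n ∈ S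

/-- `x` is an accumulation point of `S` if every neighborhood of `x` contains a
point of `S` different from `x`. -/
def IsAccPt (x : ℝ) (S : Set ℝ) : Prop := ∀ ε > 0, ∃ y ∈ S, y ≠ x ∧ |y - x| < ε

/-- The set `∂S` of accumulation points of `S` in `ℝ`. -/
def accPts (S : Set ℝ) : Set ℝ := {x | IsAccPt x S}

/-- The set of all (nonempty) finite sums of elements of `I`. -/
def finSums (I : Set ℝ) : Set ℝ :=
  {x | ∃ l : ℕ, 0 < l ∧ ∃ g : Fin l → ℝ, (∀ p, g p ∈ I) ∧ x = ∑ p, g p}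

/-- `I₊ = {0} ∪ { x ∈ [0,1] : x is a nonempty finite sum of elements of I }`. -/
def plusSet (I : Set ℝ) : Set ℝ := {0} ∪ (Set.Icc 0 1 ∩ finSums I)

/-- `D(I) = { a ≤ 1 : a = (m - 1 + f)/m, m ∈ ℕ⁺, f ∈ I₊ }`. -/
def DSet (I : Set ℝ) : Set ℝ :=
  {a | a ≤ 1 ∧ ∃ m : ℕ, 0 < m ∧ ∃ f ∈ plusSet I, a = ((m : ℝ) - 1 + f) / m}

/-- `𝒟_c(I;J) = { a ≤ 1 : a = (m - 1 + f + kc)/m, m ∈ ℕ⁺, f ∈ I₊,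
k a nonzero finite sum of elements of J }`. -/
def DcSet (I J : Set ℝ) (c : ℝ) : Set ℝ :=
  {a | a ≤ 1 ∧ ∃ m : ℕ, 0 < m ∧ ∃ f ∈ plusSet I, ∃ k ∈ finSums J, k ≠ 0 ∧
    a = ((m : ℝ) - 1 + f + k * c) / m}

/-- The closure `S̄ = S ∪ ∂S` of `S` in `ℝ`. -/
def clSet (S : Set ℝ) : Set ℝ := S ∪ accPts S

/-- If `I ⊆ ℝ` satisfies the DCC, then its closure `Ī = I ∪ ∂I` also satisfies
the DCC. -/
theorem dcc_closure (I : Set ℝ) (hI : DCC I) : DCC (clSet I) := by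
  rintro ⟨f, hf, hmem⟩
  apply hI
  have key : ∀ n : ℕ, ∃ y ∈ I, f (2*n+2) < y ∧ y < f (2*n) := by
    intro n
    have h1 : f (2*n+1) < f (2*n) := hf (by omega)
    have h2 : f (2*n+2) < f (2*n+1) := hf (by omega)
    rcases hmem (2*n+1) with h | h
    · exact ⟨f (2*n+1), h, h2, h1⟩
    · obtain ⟨y, hyI, hne, hdist⟩ :=
        h (min (f (2*n) - f (2*n+1)) (f (2*n+1) - f (2*n+2)))
          (lt_min (by linarith) (by linarith))
      rw [abs_sub_lt_iff] at hdist
      have ha := hdist.1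
      have hb := hdist.2
      have hma : min (f (2*n) - f (2*n+1)) (f (2*n+1) - f (2*n+2)) ≤ f (2*n) - f (2*n+1) :=
        min_le_left _ _
      have hmb : min (f (2*n) - f (2*n+1)) (f (2*n+1) - f (2*n+2)) ≤ f (2*n+1) - f (2*n+2) :=
        min_le_right _ _
      exact ⟨y, hyI, by linarith, by linarith⟩
  choose y hyI hlo hhi using key
  refine ⟨y, strictAnti_nat_of_succ_lt fun n => ?_, hyI⟩
  have e : 2*(n+1) = 2*n+2 := by ring
  have := hhi (n+1)
  rw [e] at this
  linarith [hlo n]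
end

section
/- Let I ⊆ [0,∞) be a set satisfying the descending chain condition and let U ≥ 0 be a real number. Then the set {0} ∪ { x ∈ ℝ : x ≤ U and x = i₁ + ⋯ + i_l for some l ∈ ℕ⁺ and i₁, …, i_l ∈ I } of finite sums of elements of I that are at most U also satisfies the descending chain condition. -/
open Filter

/-- If `I ⊆ [0,∞)` satisfies the DCC and `U ≥ 0`, then the set of finite sums of
elements of `I` that are at most `U`, together with `0`, satisfies the DCC. -/
theorem dcc_boundedSums (I : Set ℝ) (hI0 : I ⊆ Set.Ici 0) (hI : DCC I)
    (U : ℝ) (hU : 0 ≤ U) :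
    DCC ({0} ∪ {x : ℝ | x ≤ U ∧ x ∈ finSums I}) := by
  have hwf : I.IsWF := by
    rw [Set.isWF_iff_no_descending_seq]
    intro f hf hmem
    exact hI ⟨f, hf, hmem⟩
  have hpwo : (AddSubmonoid.closure I : Set ℝ).IsPWO :=
    hwf.isPWO.addSubmonoid_closure (fun x hx => hI0 hx)
  have hsub : ({0} ∪ {x : ℝ | x ≤ U ∧ x ∈ finSums I}) ⊆
      (AddSubmonoid.closure I : Set ℝ) := by
    rintro x (rfl | ⟨-, l, -, g, hg, rfl⟩)
    · exact AddSubmonoid.zero_mem _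
    · exact sum_mem fun p _ => AddSubmonoid.subset_closure (hg p)
  have hwf2 := (hpwo.isWF.mono hsub)
  rw [Set.isWF_iff_no_descending_seq] at hwf2
  rintro ⟨f, hf, hmem⟩
  exact hwf2 f hf hmem
end

section
/- Let J ⊆ [0,∞) be a set satisfying the descending chain condition. Then the set J̃ := {0} ∪ { x ∈ ℝ : x = j₁ + ⋯ + j_l for some l ∈ ℕ⁺ and j₁, …, j_l ∈ J } of all finite sums of elements of J satisfies the descending chain condition and is closed under addition (i.e., a, b ∈ J̃ implies a + b ∈ J̃). -/
open Filter

/-- If `J ⊆ [0,∞)` satisfies the DCC, then the set `J̃` of all finite sums of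
elements of `J` (together with `0`) satisfies the DCC and is closed under
addition. -/
theorem dcc_finSums_and_addClosed (J : Set ℝ) (hJ0 : J ⊆ Set.Ici 0) (hJ : DCC J) :
    DCC ({0} ∪ finSums J) ∧
      ∀ a ∈ ({0} ∪ finSums J : Set ℝ), ∀ b ∈ ({0} ∪ finSums J : Set ℝ),
        a + b ∈ ({0} ∪ finSums J : Set ℝ) := by
  constructor
  · -- DCC
    have hWF : J.IsWF := by
      rw [Set.isWF_iff_no_descending_seq]
      intro f hf hmem
      exact hJ ⟨f, hf, hmem⟩
    have hPWO : ((AddSubmonoid.closure J : AddSubmonoid ℝ) : Set ℝ).IsPWO :=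
      Set.IsPWO.addSubmonoid_closure (fun x hx => hJ0 hx) hWF.isPWO
    have hsub : ({0} ∪ finSums J : Set ℝ) ⊆ ((AddSubmonoid.closure J : AddSubmonoid ℝ) : Set ℝ) := by
      rintro x (rfl | ⟨l, hl, g, hg, rfl⟩)
      · exact (AddSubmonoid.closure J).zero_mem
      · exact sum_mem fun p _ => AddSubmonoid.subset_closure (hg p)
    rintro ⟨f, hf, hmem⟩
    exact Set.isWF_iff_no_descending_seq.mp ((hPWO.isWF).mono hsub) f hf hmem
  · rintro a ha b hb
    rcases ha with rfl | ⟨l, hl, g, hg, rfl⟩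
    · simpa using hb
    rcases hb with rfl | ⟨l', hl', g', hg', rfl⟩
    · right; exact ⟨l, hl, g, hg, by simp⟩
    right
    refine ⟨l + l', by omega, Fin.append g g', ?_, ?_⟩
    · intro p
      refine Fin.addCases (motive := fun p => Fin.append g g' p ∈ J) ?_ ?_ p
      · intro i; simpa [Fin.append_left] using hg i
      · intro i; simpa [Fin.append_right] using hg' i
    · rw [Fin.sum_univ_add]
      simp [Fin.append_left, Fin.append_right]
end

section
/- Let I ⊆ [0,∞) be a set satisfying the descending chain condition. Then the set I₊ satisfies the descending chain condition. -/
open Filter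

/-! The DCC says exactly that a set is well-founded for `≤`. Since its generators are
nonnegative, the additive monoid generated by a partially well-ordered set is again partially
well-ordered (a Higman-type lemma, `Set.IsPWO.addSubmonoid_closure`), and `I₊` lies in the
additive monoid generated by `I`. -/

theorem dcc_iff_isWF {S : Set ℝ} : DCC S ↔ S.IsWF := by
  simp [Set.isWF_iff_no_descending_seq, DCC]

theorem plusSet_subset_addSubmonoidClosure (I : Set ℝ) :
    plusSet I ⊆ AddSubmonoid.closure I := by
  rintro x (rfl | ⟨-, l, -, g, hg, rfl⟩)
  · exact zero_mem _
  · exact sum_mem fun p _ => AddSubmonoid.subset_closure (hg p)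

/-- If `I ⊆ [0,∞)` satisfies the DCC, then `I₊` satisfies the DCC. -/
theorem dcc_plusSet (I : Set ℝ) (hI0 : I ⊆ Set.Ici 0) (hI : DCC I) :
    DCC (plusSet I) := by
  rw [dcc_iff_isWF] at hI ⊢
  exact ((hI.isPWO.addSubmonoid_closure hI0).mono (plusSet_subset_addSubmonoidClosure I)).isWF
end

section
/- Let I ⊆ [0,∞) be a set satisfying the descending chain condition. Then the set D(I) satisfies the descending chain condition. -/
open Filter

/-!
For subsets of a linear order the DCC is partial well-orderedness, which survives passing to the
additive submonoid generated by nonnegative elements, monotone images and finite unions; this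
handles `I₊`. An element `(m - 1 + f) / m` of `D(I)` lying below some `b < 1` forces
`m ≤ 1 / (1 - b)`, so below `b` the set `D(I)` is a finite union of monotone images of `I₊`. A
strictly decreasing sequence in `D(I)` lies below `b := a₁ < 1` from its second term on.
-/

theorem dcc_iff_isPWO (S : Set ℝ) : DCC S ↔ S.IsPWO := by
  rw [Set.isPWO_iff_isWF, Set.isWF_iff_no_descending_seq, DCC]
  push Not
  rfl

theorem finSums_subset_addSubmonoid_closure (I : Set ℝ) :
    finSums I ⊆ AddSubmonoid.closure I := by
  rintro _ ⟨l, -, g, hg, rfl⟩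
  exact AddSubmonoid.sum_mem _ fun p _ => AddSubmonoid.subset_closure (hg p)

theorem isPWO_plusSet {I : Set ℝ} (hI0 : I ⊆ Set.Ici 0) (hI : I.IsPWO) :
    (plusSet I).IsPWO :=
  ((hI.addSubmonoid_closure hI0).insert 0).mono <|
    Set.union_subset_union_right _ <|
      Set.inter_subset_right.trans (finSums_subset_addSubmonoid_closure I)

theorem nonneg_of_mem_plusSet {I : Set ℝ} {f : ℝ} (hf : f ∈ plusSet I) : 0 ≤ f := by
  rcases hf with rfl | ⟨⟨hf0, -⟩, -⟩
  exacts [le_rfl, hf0]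

theorem DSet_inter_Iic_subset (I : Set ℝ) {b : ℝ} (hb : b < 1) :
    DSet I ∩ Set.Iic b ⊆
      ⋃ m ∈ Finset.range (⌈1 / (1 - b)⌉₊ + 1), (fun f => ((m : ℝ) - 1 + f) / m) '' plusSet I := by
  rintro _ ⟨⟨-, m, hm, f, hf, rfl⟩, hab⟩
  simp only [Set.mem_iUnion, Finset.mem_range, Nat.lt_succ_iff]
  refine ⟨m, ?_, f, hf, rfl⟩
  have hm : (0 : ℝ) < m := Nat.cast_pos.mpr hm
  have hmb : (m : ℝ) * (1 - b) ≤ 1 := by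
    rw [Set.mem_Iic, div_le_iff₀ hm] at hab
    linarith [nonneg_of_mem_plusSet hf]
  exact Nat.cast_le.mp <| ((le_div_iff₀ (sub_pos.mpr hb)).mpr hmb).trans (Nat.le_ceil _)

theorem isPWO_DSet_inter_Iic {I : Set ℝ} (hI0 : I ⊆ Set.Ici 0) (hI : I.IsPWO) {b : ℝ}
    (hb : b < 1) : (DSet I ∩ Set.Iic b).IsPWO := by
  refine Set.IsPWO.mono ?_ (DSet_inter_Iic_subset I hb)
  refine (Finset.isPWO_bUnion _).mpr fun m _ => (isPWO_plusSet hI0 hI).image_of_monotone ?_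
  exact fun x y hxy => div_le_div_of_nonneg_right (by linarith) m.cast_nonneg

/-- If `I ⊆ [0,∞)` satisfies the DCC, then `D(I)` satisfies the DCC. -/
theorem dcc_DSet (I : Set ℝ) (hI0 : I ⊆ Set.Ici 0) (hI : DCC I) :
    DCC (DSet I) := by
  rintro ⟨a, ha, hmem⟩
  have hb : a 1 < 1 := (ha zero_lt_one).trans_le (hmem 0).1
  refine (dcc_iff_isPWO _).mpr (isPWO_DSet_inter_Iic hI0 ((dcc_iff_isPWO I).mp hI) hb) ?_
  exact ⟨fun n => a (n + 1), ha.comp_strictMono (strictMono_id.add_const 1),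
    fun n => ⟨hmem _, ha.antitone (by omega)⟩⟩
end

section
/- Let J ⊆ [0,∞) be a set closed under addition. If J has at least one accumulation point in ℝ, then J has infinitely many accumulation points in ℝ. Consequently, a subset of [0,∞) which is closed under addition and has only finitely many accumulation points in ℝ has no accumulation point in ℝ at all. -/
open Filter

theorem isAccPt_iff_accPt {x : ℝ} {S : Set ℝ} : IsAccPt x S ↔ AccPt x (𝓟 S) := by
  rw [accPt_iff_nhds, Metric.nhds_basis_ball.forall_iff fun _ _ hUV ⟨y, hyU, hy⟩ ↦
    ⟨y, ⟨hUV hyU.1, hyU.2⟩, hy⟩]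
  simp only [IsAccPt, Metric.mem_ball, Real.dist_eq, Set.mem_inter_iff]
  exact forall₂_congr fun _ _ ↦ ⟨fun ⟨y, hyS, hyx, hy⟩ ↦ ⟨y, ⟨hy, hyS⟩, hyx⟩,
    fun ⟨y, ⟨hy, hyS⟩, hyx⟩ ↦ ⟨y, hyS, hyx, hy⟩⟩

theorem IsAccPt.infinite {x : ℝ} {S : Set ℝ} (h : IsAccPt x S) : S.Infinite :=
  Set.Infinite.of_accPt (isAccPt_iff_accPt.mp h)

theorem IsAccPt.add_of_add_mem {x y : ℝ} {S T : Set ℝ} (h : IsAccPt x S)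
    (hST : ∀ s ∈ S, s + y ∈ T) : IsAccPt (x + y) T := by
  intro ε hε
  obtain ⟨s, hs, hsx, hsε⟩ := h ε hε
  exact ⟨s + y, hST s hs, by simpa using hsx, by simpa using hsε⟩

theorem accPts_infinite_of_addClosed_general (J : Set ℝ)
    (hadd : ∀ a ∈ J, ∀ b ∈ J, a + b ∈ J) :
    ((∃ x, IsAccPt x J) → (accPts J).Infinite) ∧
      ((accPts J).Finite → accPts J = ∅) := by
  have hinf : (∃ x, IsAccPt x J) → (accPts J).Infinite := by
    rintro ⟨x, hx⟩
    -- Translating `J` by any of its elements keeps it inside `J`.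
    have hsub : (x + ·) '' J ⊆ accPts J := by
      rintro _ ⟨y, hy, rfl⟩
      exact hx.add_of_add_mem fun s hs ↦ hadd s hs y hy
    exact (hx.infinite.image (add_right_injective x).injOn).mono hsub
  exact ⟨hinf, fun hfin ↦ Set.eq_empty_of_forall_notMem fun x hx ↦ hinf ⟨x, hx⟩ hfin⟩

/-- If `J ⊆ [0,∞)` is closed under addition and has at least one accumulation
point in `ℝ`, then it has infinitely many accumulation points in `ℝ`.
Consequently, if it has only finitely many accumulation points in `ℝ`, it has
none at all. -/
theorem accPts_infinite_of_addClosed (J : Set ℝ) (hJ0 : J ⊆ Set.Ici 0)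
    (hadd : ∀ a ∈ J, ∀ b ∈ J, a + b ∈ J) :
    ((∃ x, IsAccPt x J) → (accPts J).Infinite) ∧
      ((accPts J).Finite → accPts J = ∅) :=
  accPts_infinite_of_addClosed_general J hadd
end

section
/- Let X, Y ⊆ [0,∞) be sets satisfying the descending chain condition, and let T := { (1 − x)/y : x ∈ X, x ≤ 1, y ∈ Y, y > 0 }. Then every nonzero accumulation point c of T in ℝ is of the form c = (1 − x̄)/ȳ for some x̄ ∈ X̄ with 0 ≤ x̄ ≤ 1 and some ȳ ∈ Ȳ with ȳ > 0. -/
open Filter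

lemma mem_clSet_of_tendsto' {S : Set ℝ} {u : ℕ → ℝ} {L : ℝ} (hu : ∀ n, u n ∈ S)
    (h : Filter.Tendsto u Filter.atTop (nhds L)) : L ∈ clSet S := by
  by_cases he : ∃ n, u n = L
  · obtain ⟨n, hn⟩ := he
    exact Or.inl (hn ▸ hu n)
  · push_neg at he
    refine Or.inr fun ε hε => ?_
    obtain ⟨N, hN⟩ := Metric.tendsto_atTop.1 h ε hε
    have := hN N le_rfl
    rw [Real.dist_eq] at this
    exact ⟨u N, hu N, he N, this⟩

lemma strictAnti_of_tendsto_zero' {S : Set ℝ} {u : ℕ → ℝ} (hu : ∀ n, u n ∈ S)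
    (hpos : ∀ n, 0 < u n) (h : Filter.Tendsto u Filter.atTop (nhds 0)) :
    ∃ f : ℕ → ℝ, StrictAnti f ∧ ∀ n, f n ∈ S := by
  have key : ∀ v : ℝ, 0 < v → ∃ n, u n < v := by
    intro v hv
    obtain ⟨N, hN⟩ := Metric.tendsto_atTop.1 h v hv
    refine ⟨N, ?_⟩
    have := hN N le_rfl
    rwa [Real.dist_eq, sub_zero, abs_of_pos (hpos N)] at this
  let g : ℕ → ℕ := fun k => Nat.rec 0 (fun _ m => (key (u m) (hpos m)).choose) k
  have hg : ∀ k, u (g (k+1)) < u (g k) := fun k => (key (u (g k)) (hpos (g k))).choose_spec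
  exact ⟨fun k => u (g k), strictAnti_nat_of_succ_lt hg, fun k => hu (g k)⟩

/-- Let `X, Y ⊆ [0,∞)` satisfy the DCC and let
`T = { (1 - x)/y : x ∈ X, x ≤ 1, y ∈ Y, y > 0 }`. Then every nonzero
accumulation point `c` of `T` has the form `c = (1 - x̄)/ȳ` with `x̄ ∈ X̄`,
`0 ≤ x̄ ≤ 1`, `ȳ ∈ Ȳ`, `ȳ > 0`. -/
theorem accPt_of_threshold_set (X Y : Set ℝ) (hX0 : X ⊆ Set.Ici 0)
    (hY0 : Y ⊆ Set.Ici 0) (hX : DCC X) (hY : DCC Y) (c : ℝ) (hc0 : c ≠ 0)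
    (hc : IsAccPt c {t : ℝ | ∃ x ∈ X, x ≤ 1 ∧ ∃ y ∈ Y, 0 < y ∧ t = (1 - x) / y}) :
    ∃ x ∈ clSet X, 0 ≤ x ∧ x ≤ 1 ∧ ∃ y ∈ clSet Y, 0 < y ∧ c = (1 - x) / y := by
  have hcabs : (0:ℝ) < |c| := abs_pos.2 hc0
  have hc2 : (0:ℝ) < |c|/2 := by positivity
  have hseq : ∀ n : ℕ, ∃ t : ℝ, (∃ x ∈ X, x ≤ 1 ∧ ∃ y ∈ Y, 0 < y ∧ t = (1 - x) / y) ∧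
      |t - c| < min (1/((n:ℝ)+1)) (|c|/2) := by
    intro n
    obtain ⟨t, ht, _, hlt⟩ := hc (min (1/((n:ℝ)+1)) (|c|/2)) (lt_min (by positivity) hc2)
    exact ⟨t, ht, hlt⟩
  choose t ht htlt using hseq
  choose x hxX hx1 y hyY hy0 hty using ht
  have htc : Filter.Tendsto t Filter.atTop (nhds c) := by
    rw [Metric.tendsto_atTop]
    intro ε hε
    obtain ⟨N, hN⟩ := exists_nat_one_div_lt hε
    refine ⟨N, fun n hn => ?_⟩
    rw [Real.dist_eq]
    calc |t n - c| < min (1/((n:ℝ)+1)) (|c|/2) := htlt n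
      _ ≤ 1/((n:ℝ)+1) := min_le_left _ _
      _ ≤ 1/((N:ℝ)+1) := by gcongr
      _ < ε := hN
  have htabs : ∀ n, |c|/2 < |t n| := by
    intro n
    have h1 : |t n - c| < |c|/2 := lt_of_lt_of_le (htlt n) (min_le_right _ _)
    have h2 : |c| - |t n| ≤ |t n - c| := by
      have := abs_sub_abs_le_abs_sub c (t n)
      rwa [abs_sub_comm] at this
    linarith
  have htne : ∀ n, t n ≠ 0 := by
    intro n h
    have := htabs n
    rw [h, abs_zero] at this
    linarith
  have hx0 : ∀ n, 0 ≤ x n := fun n => hX0 (hxX n)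
  have hyx : ∀ n, y n = (1 - x n) / t n := by
    intro n
    rw [eq_div_iff (htne n), hty n]
    rw [mul_div_cancel₀ _ (ne_of_gt (hy0 n))]
  have hybd : ∀ n, y n ∈ Set.Icc (0:ℝ) (2/|c|) := by
    intro n
    refine ⟨(hy0 n).le, ?_⟩
    have h1 : y n ≤ |y n| := le_abs_self _
    have h2 : |y n| = |1 - x n| / |t n| := by rw [hyx n, abs_div]
    have h3 : |1 - x n| ≤ 1 := by
      rw [abs_le]; constructor <;> [linarith [hx1 n]; linarith [hx0 n]]
    have h5 : |y n| * |t n| = |1 - x n| := by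
      rw [h2, div_mul_cancel₀ _ (abs_ne_zero.2 (htne n))]
    have h6 : |y n| ≤ 2/|c| := by
      rw [le_div_iff₀ hcabs]
      nlinarith [htabs n, abs_nonneg (y n)]
    linarith
  have hxbd : ∀ n, x n ∈ Set.Icc (0:ℝ) 1 := fun n => ⟨hx0 n, hx1 n⟩
  obtain ⟨xb, hxbcl, φ, hφ, hxφ⟩ := tendsto_subseq_of_bounded (Metric.isBounded_Icc (0:ℝ) 1) hxbd
  obtain ⟨yb, hybcl, ψ, hψ, hyψ⟩ := tendsto_subseq_of_bounded (Metric.isBounded_Icc (0:ℝ) (2/|c|))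
    (fun n => hybd (φ n))
  rw [(isClosed_Icc).closure_eq] at hxbcl hybcl
  have hxσ : Filter.Tendsto (fun n => x (φ (ψ n))) Filter.atTop (nhds xb) :=
    hxφ.comp hψ.tendsto_atTop
  have hyσ : Filter.Tendsto (fun n => y (φ (ψ n))) Filter.atTop (nhds yb) := hyψ
  have hybne : yb ≠ 0 := by
    intro h
    apply hY
    exact strictAnti_of_tendsto_zero' (fun n => hyY (φ (ψ n))) (fun n => hy0 (φ (ψ n)))
      (h ▸ hyσ)
  have hybpos : 0 < yb := lt_of_le_of_ne hybcl.1 (Ne.symm hybne)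
  have hlim : Filter.Tendsto (fun n => (1 - x (φ (ψ n))) / y (φ (ψ n)))
      Filter.atTop (nhds ((1 - xb) / yb)) :=
    (tendsto_const_nhds.sub hxσ).div hyσ hybne
  have heq : (fun n => (1 - x (φ (ψ n))) / y (φ (ψ n))) = fun n => t (φ (ψ n)) := by
    funext n; rw [hty (φ (ψ n))]
  have htσ : Filter.Tendsto (fun n => t (φ (ψ n))) Filter.atTop (nhds c) :=
    htc.comp (hφ.comp hψ).tendsto_atTop
  have hfinal : c = (1 - xb) / yb := tendsto_nhds_unique htσ (heq ▸ hlim)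
  exact ⟨xb, mem_clSet_of_tendsto' (fun n => hxX (φ (ψ n))) hxσ, hxbcl.1, hxbcl.2,
    yb, mem_clSet_of_tendsto' (fun n => hyY (φ (ψ n))) hyσ, hybpos, hfinal⟩
end

section
/- Let I ⊆ [0,∞) be a set satisfying the descending chain condition. Then every accumulation point of I₊ in ℝ lies in (Ī)₊; that is, ∂(I₊) ⊆ (Ī)₊, where Ī = I ∪ ∂I is the closure of I in ℝ. -/
open Filter

/-- A DCC set of nonnegative reals with a positive element has a positive
uniform lower bound on its nonzero elements. -/
lemma DCC.exists_pos_lb {I : Set ℝ} (hI0 : I ⊆ Set.Ici 0) (hI : DCC I)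
    (hne : ∃ i ∈ I, 0 < i) : ∃ μ > 0, ∀ i ∈ I, i ≠ 0 → μ ≤ i := by
  by_contra h
  push_neg at h
  obtain ⟨i0, hi0I, hi0⟩ := hne
  have step : ∀ s : ℝ, s ∈ I ∧ 0 < s → ∃ t : ℝ, (t ∈ I ∧ 0 < t) ∧ t < s := by
    rintro s ⟨hs, hspos⟩
    obtain ⟨t, htI, ht0, htlt⟩ := h s hspos
    exact ⟨t, ⟨htI, lt_of_le_of_ne (hI0 htI) (Ne.symm ht0)⟩, htlt⟩
  choose t ht htlt using step
  let f : ℕ → {s : ℝ // s ∈ I ∧ 0 < s} := fun n =>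
    Nat.rec ⟨i0, hi0I, hi0⟩ (fun _ p => ⟨t p.1 p.2, ht p.1 p.2⟩) n
  have hdec : ∀ n, (f (n + 1)).1 < (f n).1 := fun n => htlt _ (f n).2
  exact hI ⟨fun n => (f n).1, strictAnti_nat_of_succ_lt hdec, fun n => (f n).2.1⟩

/-- The limit of a sequence of elements of `I` lies in `clSet I`. -/
lemma mem_clSet_of_tendsto {u : ℕ → ℝ} {c : ℝ} {I : Set ℝ}
    (hu : Tendsto u atTop (nhds c)) (hmem : ∀ n, u n ∈ I) : c ∈ clSet I := by
  by_cases hc : c ∈ I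
  · exact Or.inl hc
  · refine Or.inr (fun ε hε => ?_)
    obtain ⟨N, hN⟩ := Metric.tendsto_atTop.mp hu ε hε
    refine ⟨u N, hmem N, fun h => hc (h ▸ hmem N), ?_⟩
    simpa [Real.dist_eq] using hN N le_rfl

/-- A nonzero element of `finSums I` (bounded by 1) is a sum of finitely many
elements of `I ∩ [μ, 1]`, where `μ` is a lower bound on nonzero elements. -/
lemma finSums_repr {I : Set ℝ} (hI0 : I ⊆ Set.Ici 0) {μ : ℝ}
    (hlb : ∀ i ∈ I, i ≠ 0 → μ ≤ i) {y : ℝ} (hy : y ∈ finSums I) (hy0 : y ≠ 0)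
    (hy1 : y ≤ 1) :
    ∃ k : ℕ, 0 < k ∧ (k : ℝ) * μ ≤ 1 ∧ ∃ g : Fin k → ℝ,
      (∀ p, g p ∈ I ∧ μ ≤ g p ∧ g p ≤ 1) ∧ y = ∑ p, g p := by
  obtain ⟨l, hl, g, hg, hsum⟩ := hy
  classical
  set T : Finset (Fin l) := Finset.univ.filter (fun p => g p ≠ 0) with hT
  have hTsum : ∑ p ∈ T, g p = y := by
    rw [hsum, hT]
    exact Finset.sum_filter_ne_zero _
  have hTmem : ∀ p ∈ T, g p ∈ I ∧ μ ≤ g p ∧ g p ≤ 1 := by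
    intro p hp
    have hpne : g p ≠ 0 := (Finset.mem_filter.mp hp).2
    refine ⟨hg p, hlb _ (hg p) hpne, ?_⟩
    calc g p ≤ ∑ q ∈ T, g q :=
          Finset.single_le_sum (fun q _ => hI0 (hg q)) hp
      _ = y := hTsum
      _ ≤ 1 := hy1
  have hTne : T.Nonempty := by
    by_contra hc
    rw [Finset.not_nonempty_iff_eq_empty] at hc
    rw [hc, Finset.sum_empty] at hTsum
    exact hy0 hTsum.symm
  have hcard : (T.card : ℝ) * μ ≤ 1 := by
    have h1 : T.card • μ ≤ ∑ p ∈ T, g p :=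
      Finset.card_nsmul_le_sum T g μ (fun p hp => (hTmem p hp).2.1)
    rw [nsmul_eq_mul] at h1
    exact h1.trans (hTsum.le.trans hy1)
  have e := T.equivFin
  refine ⟨T.card, Finset.card_pos.mpr hTne, hcard,
    fun j => g (e.symm j).1, fun j => hTmem _ (e.symm j).2, ?_⟩
  rw [← hTsum, ← Finset.sum_coe_sort T g]
  exact (Equiv.sum_comp e.symm (fun a => g a.1)).symm

/-- If `I ⊆ [0,∞)` satisfies the DCC, then `∂(I₊) ⊆ (Ī)₊`. -/
theorem accPts_plusSet_subset (I : Set ℝ) (hI0 : I ⊆ Set.Ici 0) (hI : DCC I) :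
    accPts (plusSet I) ⊆ plusSet (clSet I) := by
  intro x hx
  by_cases hx0 : x = 0
  · exact Or.inl hx0
  · -- a sequence in `plusSet I` converging to `x`, avoiding `x` and `0`
    have hseq : ∀ n : ℕ, ∃ z, z ∈ plusSet I ∧ z ≠ x ∧
        |z - x| < min ((n : ℝ) + 1)⁻¹ |x| := fun n =>
      hx (min ((n : ℝ) + 1)⁻¹ |x|) (lt_min (by positivity) (abs_pos.mpr hx0))
    choose y hyP hyx hylt using hseq
    have hy0 : ∀ n, y n ≠ 0 := by
      intro n h
      have h2 : |y n - x| < |x| := (hylt n).trans_le (min_le_right _ _)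
      rw [h] at h2
      simp at h2
    have hyF : ∀ n, y n ∈ Set.Icc 0 1 ∩ finSums I := by
      intro n
      rcases hyP n with h | h
      · exact absurd h (hy0 n)
      · exact h
    have hytend : Tendsto y atTop (nhds x) := by
      rw [tendsto_iff_dist_tendsto_zero]
      refine squeeze_zero (fun n => dist_nonneg) (fun n => ?_)
        tendsto_one_div_add_atTop_nhds_zero_nat
      rw [Real.dist_eq, one_div]
      exact ((hylt n).trans_le (min_le_left _ _)).le
    obtain ⟨μ, hμpos, hlb⟩ : ∃ μ > 0, ∀ i ∈ I, i ≠ 0 → μ ≤ i := by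
      refine hI.exists_pos_lb hI0 ?_
      obtain ⟨l, hl, g, hg, hsum⟩ := (hyF 0).2
      by_contra hc
      push_neg at hc
      have hz : ∀ p, g p = 0 := fun p =>
        le_antisymm (by simpa using hc (g p) (hg p)) (hI0 (hg p))
      exact hy0 0 (by rw [hsum]; simp [hz])
    have hrep : ∀ n, ∃ k : ℕ, 0 < k ∧ (k : ℝ) * μ ≤ 1 ∧ ∃ g : Fin k → ℝ,
        (∀ p, g p ∈ I ∧ μ ≤ g p ∧ g p ≤ 1) ∧ y n = ∑ p, g p := fun n =>
      finSums_repr hI0 hlb (hyF n).2 (hy0 n) (hyF n).1.2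
    choose k hkpos hkb g hgmem hgsum using hrep
    -- pigeonhole: some value K of k occurs infinitely often
    have hkle : ∀ n, k n ≤ ⌈μ⁻¹⌉₊ := by
      intro n
      have h1 : (k n : ℝ) ≤ μ⁻¹ := by
        rw [← one_div, le_div_iff₀ hμpos]
        exact hkb n
      exact_mod_cast h1.trans (Nat.le_ceil _)
    obtain ⟨K, hK⟩ : ∃ K : ℕ, {n | k n = K}.Infinite := by
      have hfin : Finite (Set.Iic ⌈μ⁻¹⌉₊) := Set.finite_Iic _ |>.to_subtype
      obtain ⟨⟨K, _⟩, hK⟩ := Finite.exists_infinite_fiber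
        (fun n : ℕ => (⟨k n, hkle n⟩ : Set.Iic ⌈μ⁻¹⌉₊))
      rw [Set.infinite_coe_iff] at hK
      refine ⟨K, hK.mono ?_⟩
      intro n hn
      simpa using congrArg Subtype.val hn
    obtain ⟨φ, hφmono, hφ⟩ := extraction_of_frequently_atTop
      (Nat.frequently_atTop_iff_infinite.mpr hK)
    have hKpos : 0 < K := hφ 0 ▸ hkpos (φ 0)
    let h : ℕ → (Fin K → ℝ) := fun m j => g (φ m) (Fin.cast (hφ m).symm j)
    have hhmem : ∀ m, h m ∈ Set.pi Set.univ (fun _ : Fin K => Set.Icc μ 1) := by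
      intro m j _
      exact ⟨(hgmem (φ m) _).2.1, (hgmem (φ m) _).2.2⟩
    have hhsum : ∀ m, ∑ j, h m j = y (φ m) := by
      intro m
      rw [hgsum (φ m)]
      exact (Fintype.sum_equiv (finCongr (hφ m)) (fun p => g (φ m) p) (h m)
        (fun p => rfl)).symm
    obtain ⟨c, hcmem, ψ, hψmono, hψ⟩ :=
      (isCompact_univ_pi (fun _ : Fin K => isCompact_Icc)).tendsto_subseq hhmem
    have hcoord : ∀ j : Fin K, c j ∈ clSet I := by
      intro j
      exact mem_clSet_of_tendsto
        (((continuous_apply j).continuousAt).tendsto.comp hψ)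
        (fun m => (hgmem (φ (ψ m)) _).1)
    have hsumtend : Tendsto (fun m => ∑ j, h (ψ m) j) atTop (nhds (∑ j, c j)) :=
      tendsto_finset_sum _ (fun j _ =>
        ((continuous_apply j).continuousAt).tendsto.comp hψ)
    have hytend2 : Tendsto (fun m => ∑ j, h (ψ m) j) atTop (nhds x) := by
      have heq : (fun m => ∑ j, h (ψ m) j) = fun m => y (φ (ψ m)) := by
        funext m; exact hhsum (ψ m)
      rw [heq]
      exact hytend.comp ((hφmono.comp hψmono).tendsto_atTop)
    have hxsum : x = ∑ j, c j := tendsto_nhds_unique hytend2 hsumtend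
    refine Or.inr ⟨⟨?_, ?_⟩, K, hKpos, c, hcoord, hxsum⟩
    · exact ge_of_tendsto' hytend (fun n => (hyF n).1.1)
    · exact le_of_tendsto' hytend (fun n => (hyF n).1.2)
end

section
/- Let I ⊆ [0,∞) be a set satisfying the descending chain condition. Then every accumulation point of D(I) in ℝ is either equal to 1 or lies in D(Ī); that is, ∂(D(I)) ⊆ {1} ∪ D(Ī), where Ī = I ∪ ∂I is the closure of I in ℝ and D(Ī) is defined using (Ī)₊. -/
open Filter

/-!
By the DCC, the positive elements of `I` are bounded below by some `ε > 0`, so every element of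
`I₊ \ {0}` is a sum of at most `1/ε` elements of `I ∩ [ε, 1]`. For each fixed length the set of such
sums is the continuous image of a set with compact closure, so its closure consists of sums of
elements of `Ī`; hence `closure I₊ ⊆ Ī₊`. Below any `b < 1`, `D(I)` only involves the finitely many
`m ≤ 1/(1 - b)`, and each `(m - 1 + I₊)/m` has closure `(m - 1 + closure I₊)/m ⊆ D(Ī)`.
-/

open Set

lemma accPts_subset_closure (S : Set ℝ) : accPts S ⊆ closure S := fun _ hx =>
  Metric.mem_closure_iff.mpr fun ε hε => by
    obtain ⟨y, hy, -, hyx⟩ := hx ε hε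
    exact ⟨y, hy, by rwa [Real.dist_eq, abs_sub_comm]⟩

lemma closure_subset_clSet (S : Set ℝ) : closure S ⊆ clSet S := by
  intro x hx
  by_cases hxS : x ∈ S
  · exact Or.inl hxS
  · refine Or.inr fun ε hε => ?_
    obtain ⟨y, hy, hxy⟩ := Metric.mem_closure_iff.mp hx ε hε
    exact ⟨y, hy, fun h => hxS (h ▸ hy), by rwa [Real.dist_eq, abs_sub_comm] at hxy⟩

lemma finSums_mono {I J : Set ℝ} (h : I ⊆ J) : finSums I ⊆ finSums J := by
  rintro _ ⟨l, hl, g, hg, rfl⟩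
  exact ⟨l, hl, g, fun p => h (hg p), rfl⟩

lemma plusSet_mono {I J : Set ℝ} (h : I ⊆ J) : plusSet I ⊆ plusSet J :=
  union_subset_union_right _ (inter_subset_inter_right _ (finSums_mono h))

lemma DSet_mono {I J : Set ℝ} (h : I ⊆ J) : DSet I ⊆ DSet J := by
  rintro _ ⟨ha, m, hm, f, hf, rfl⟩
  exact ⟨ha, m, hm, f, plusSet_mono h hf, rfl⟩

lemma plusSet_subset_Icc (I : Set ℝ) : plusSet I ⊆ Icc 0 1 :=
  union_subset (singleton_subset_iff.mpr ⟨le_rfl, zero_le_one⟩) inter_subset_left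

lemma DCC.exists_pos_le {I : Set ℝ} (hI : DCC I) : ∃ ε > 0, ∀ x ∈ I, 0 < x → ε ≤ x := by
  have hwf : (I ∩ Ioi 0).IsWF := isWF_iff_no_descending_seq.mpr fun f hf hfI =>
    hI ⟨f, hf, fun n => (hfI n).1⟩
  by_cases hne : (I ∩ Ioi 0).Nonempty
  · exact ⟨hwf.min hne, (hwf.min_mem hne).2, fun x hx hx0 => hwf.min_le hne ⟨hx, hx0⟩⟩
  · exact ⟨1, one_pos, fun x hx hx0 => absurd ⟨x, hx, hx0⟩ hne⟩

lemma Fin.exists_sum_eq_sum_of_ne_zero {M : Type*} [AddCommMonoid M] {l : ℕ} (g : Fin l → M) :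
    ∃ (k : ℕ) (h : Fin k → M), (∀ q, h q ≠ 0 ∧ h q ∈ range g) ∧ ∑ q, h q = ∑ p, g p := by
  classical
  let s := Finset.univ.filter fun p => g p ≠ 0
  refine ⟨s.card, fun q => g (s.equivFin.symm q),
    fun q => ⟨(Finset.mem_filter.mp (s.equivFin.symm q).2).2, mem_range_self _⟩, ?_⟩
  rw [Equiv.sum_comp s.equivFin.symm (fun p => g p), Finset.sum_coe_sort,
    Finset.sum_filter_ne_zero]

def sumsOfLength (K : Set ℝ) (l : ℕ) : Set ℝ :=
  (fun g : Fin l → ℝ => ∑ p, g p) '' univ.pi fun _ => K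

lemma sumsOfLength_mono {K L : Set ℝ} (h : K ⊆ L) (l : ℕ) :
    sumsOfLength K l ⊆ sumsOfLength L l :=
  image_mono (pi_mono fun _ _ => h)

lemma sumsOfLength_subset_finSums (K : Set ℝ) {l : ℕ} (hl : 0 < l) :
    sumsOfLength K l ⊆ finSums K := by
  rintro _ ⟨g, hg, rfl⟩
  exact ⟨l, hl, g, fun p => hg p (mem_univ p), rfl⟩

lemma closure_sumsOfLength_subset {K : Set ℝ} (hK : Bornology.IsBounded K) (l : ℕ) :
    closure (sumsOfLength K l) ⊆ sumsOfLength (closure K) l := by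
  have hcpt : IsCompact (closure (univ.pi fun _ : Fin l => K)) := by
    rw [closure_pi_set]
    exact isCompact_univ_pi fun _ => hK.isCompact_closure
  rw [sumsOfLength, ← image_closure_of_isCompact hcpt (by fun_prop), closure_pi_set]
  rfl

/-- Zero summands can be dropped, and each remaining one is at least `ε`. -/
lemma exists_mem_sumsOfLength {I : Set ℝ} (hI0 : I ⊆ Ici 0) {ε : ℝ} (hε : 0 < ε)
    (hεI : ∀ x ∈ I, 0 < x → ε ≤ x) {x : ℝ} (hx : x ∈ finSums I) (hx0 : x ≠ 0) (hx1 : x ≤ 1) :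
    ∃ l ∈ Finset.Icc 1 ⌊ε⁻¹⌋₊, x ∈ sumsOfLength (I ∩ Icc ε 1) l := by
  obtain ⟨_, _, g₀, hg₀, rfl⟩ := hx
  obtain ⟨l, g, hg, hsum⟩ := Fin.exists_sum_eq_sum_of_ne_zero g₀
  have hgI (q) : g q ∈ I := by
    obtain ⟨p, hp⟩ := (hg q).2
    exact hp ▸ hg₀ p
  have hgε (q) : ε ≤ g q := hεI _ (hgI q) ((hI0 (hgI q)).lt_of_ne (hg q).1.symm)
  have hg1 (q) : g q ≤ 1 :=
    (Finset.single_le_sum (fun q _ => hI0 (hgI q)) (Finset.mem_univ q)).trans (hsum ▸ hx1)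
  have hl : 0 < l := by
    refine Nat.pos_of_ne_zero fun hl0 => hx0 ?_
    subst hl0
    rw [← hsum, Fin.sum_univ_zero]
  have hlε : l * ε ≤ 1 := by
    simpa using (Finset.card_nsmul_le_sum Finset.univ g ε fun q _ => hgε q).trans (hsum ▸ hx1)
  refine ⟨l, Finset.mem_Icc.mpr ⟨hl, Nat.le_floor ?_⟩, g,
    fun q _ => ⟨hgI q, hgε q, hg1 q⟩, hsum⟩
  rwa [← one_div, le_div_iff₀ hε]

theorem closure_plusSet_subset {I : Set ℝ} (hI0 : I ⊆ Ici 0) (hI : DCC I) :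
    closure (plusSet I) ⊆ plusSet (closure I) := by
  obtain ⟨ε, hε, hεI⟩ := hI.exists_pos_le
  have hcover : plusSet I ⊆ {0} ∪ ⋃ l ∈ Finset.Icc 1 ⌊ε⁻¹⌋₊, sumsOfLength (I ∩ Icc ε 1) l := by
    rintro x (hx | ⟨hx01, hx⟩)
    · exact Or.inl hx
    by_cases hx0 : x = 0
    · exact Or.inl hx0
    obtain ⟨l, hl, hxl⟩ := exists_mem_sumsOfLength hI0 hε hεI hx hx0 hx01.2
    exact Or.inr (mem_biUnion hl hxl)
  intro x hx
  have hx01 : x ∈ Icc 0 1 := closure_minimal (plusSet_subset_Icc I) isClosed_Icc hx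
  have hx' := closure_mono hcover hx
  rw [closure_union, closure_singleton, Finset.closure_biUnion] at hx'
  rcases hx' with hx0 | hx'
  · exact Or.inl hx0
  obtain ⟨l, hl, hxl⟩ := mem_iUnion₂.mp hx'
  have hxl' :=
    closure_sumsOfLength_subset ((Metric.isBounded_Icc ε 1).subset inter_subset_right) l hxl
  exact Or.inr ⟨hx01, sumsOfLength_subset_finSums _ (Finset.mem_Icc.mp hl).1
    (sumsOfLength_mono (closure_mono inter_subset_left) l hxl')⟩

/-- Because `(m - 1 + f)/m ≥ 1 - 1/m`. -/
lemma DSet_inter_Iio_subset (I : Set ℝ) {b : ℝ} (hb : b < 1) :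
    DSet I ∩ Iio b ⊆
      ⋃ m ∈ Finset.Icc 1 ⌊(1 - b)⁻¹⌋₊, (fun f : ℝ => ((m : ℝ) - 1 + f) / m) '' plusSet I := by
  rintro _ ⟨⟨-, m, hm, f, hf, rfl⟩, hyb⟩
  refine mem_biUnion (Finset.mem_Icc.mpr ⟨hm, Nat.le_floor ?_⟩) (mem_image_of_mem _ hf)
  have hf0 := (plusSet_subset_Icc I hf).1
  have hm' : (0 : ℝ) < m := by exact_mod_cast hm
  rw [mem_Iio, div_lt_iff₀ hm'] at hyb
  rw [← one_div, le_div_iff₀ (by linarith)]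
  linarith

theorem closure_DSet_subset {I : Set ℝ} (hI0 : I ⊆ Ici 0) (hI : DCC I) :
    closure (DSet I) ⊆ {1} ∪ DSet (closure I) := by
  intro a ha
  have ha1 : a ≤ 1 := closure_minimal (fun _ hy => hy.1) isClosed_Iic ha
  rcases ha1.eq_or_lt with rfl | ha1'
  · exact Or.inl rfl
  have hab : a ∈ closure (DSet I ∩ Iio ((a + 1) / 2)) := by
    rw [inter_comm]
    exact isOpen_Iio.inter_closure ⟨by rw [mem_Iio]; linarith, ha⟩
  have ham := closure_mono (DSet_inter_Iio_subset I (by linarith)) hab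
  rw [Finset.closure_biUnion] at ham
  obtain ⟨m, hm, ham⟩ := mem_iUnion₂.mp ham
  have hcpt := ((Metric.isBounded_Icc (0 : ℝ) 1).subset (plusSet_subset_Icc I)).isCompact_closure
  rw [← image_closure_of_isCompact hcpt (by fun_prop)] at ham
  obtain ⟨f, hf, rfl⟩ := ham
  exact Or.inr ⟨ha1, m, (Finset.mem_Icc.mp hm).1, f, closure_plusSet_subset hI0 hI hf, rfl⟩

/-- If `I ⊆ [0,∞)` satisfies the DCC, then `∂(D(I)) ⊆ {1} ∪ D(Ī)`. -/
theorem accPts_DSet_subset (I : Set ℝ) (hI0 : I ⊆ Set.Ici 0) (hI : DCC I) :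
    accPts (DSet I) ⊆ {1} ∪ DSet (clSet I) :=
  calc accPts (DSet I) ⊆ closure (DSet I) := accPts_subset_closure _
    _ ⊆ {1} ∪ DSet (closure I) := closure_DSet_subset hI0 hI
    _ ⊆ {1} ∪ DSet (clSet I) :=
      union_subset_union_right _ (DSet_mono (closure_subset_clSet I))
end

section
/- Let I₁, I₂, J ⊆ [0,∞) be sets satisfying the descending chain condition, and let T := { c ≥ 0 : there exist a finite family j₁, …, j_q ∈ J with j₁ + ⋯ + j_q ≠ 0 and finite (possibly empty) families i₁, …, i_r ∈ I₁ and i'₁, …, i'_s ∈ I₂ such that 2 = c·(j₁ + ⋯ + j_q) + (i₁ + ⋯ + i_r) + (i'₁ + ⋯ + i'_s) }. Then every accumulation point c̃ of T in ℝ is either 0 or satisfies 2 = c̃·t̄ + s̄₁ + s̄₂, where t̄ > 0 lies in the closure in ℝ of the set of nonzero finite sums of elements of J, and s̄₁ (resp. s̄₂) lies in the closure in ℝ of the set of finite sums of elements of I₁ (resp. I₂), including the empty sum 0. -/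
open Filter

lemma mem_clSet_of_tendsto_s19 {S : Set ℝ} {x : ℕ → ℝ} {a : ℝ} (hx : ∀ n, x n ∈ S)
    (h : Tendsto x atTop (nhds a)) : a ∈ clSet S := by
  by_cases ha : a ∈ S
  · exact Or.inl ha
  · right
    intro ε hε
    obtain ⟨N, hN⟩ := Metric.tendsto_atTop.mp h ε hε
    refine ⟨x N, hx N, ?_, ?_⟩
    · intro hxa; exact ha (hxa ▸ hx N)
    · simpa [Real.dist_eq] using hN N le_rfl

lemma exists_pos_lb_of_DCC {J : Set ℝ} (hdJ : DCC J) :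
    ∃ δ > 0, ∀ j ∈ J, 0 < j → δ ≤ j := by
  by_contra h
  push_neg at h
  apply hdJ
  choose g hgJ hgpos hglt using h
  let f : ℕ → {x : ℝ // x ∈ J ∧ 0 < x} := fun n =>
    Nat.rec ⟨g 1 one_pos, hgJ 1 one_pos, hgpos 1 one_pos⟩
      (fun _ p => ⟨g p.1 p.2.2, hgJ p.1 p.2.2, hgpos p.1 p.2.2⟩) n
  refine ⟨fun n => (f n).1, strictAnti_nat_of_succ_lt fun n => ?_, fun n => (f n).2.1⟩
  exact hglt (f n).1 (f n).2.2

lemma finSums_nonneg {I : Set ℝ} (hI : I ⊆ Set.Ici 0) {k : ℝ} (hk : k ∈ finSums I) :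
    0 ≤ k := by
  obtain ⟨l, hl, g, hg, rfl⟩ := hk
  exact Finset.sum_nonneg fun p _ => hI (hg p)

lemma sum_nonneg' {I : Set ℝ} (hI : I ⊆ Set.Ici 0) {s : ℝ}
    (hs : s ∈ ({0} ∪ finSums I : Set ℝ)) : 0 ≤ s := by
  rcases hs with hs | hs
  · simp at hs; simp [hs]
  · exact finSums_nonneg hI hs

lemma finSums_lb {J : Set ℝ} (hJ0 : J ⊆ Set.Ici 0) {δ : ℝ}
    (hδ : ∀ j ∈ J, 0 < j → δ ≤ j) {k : ℝ} (hk : k ∈ finSums J) (hk0 : k ≠ 0) :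
    δ ≤ k := by
  obtain ⟨l, hl, g, hg, rfl⟩ := hk
  have hpos : ∃ p, 0 < g p := by
    by_contra hno
    push_neg at hno
    exact hk0 (Finset.sum_eq_zero fun p _ => le_antisymm (hno p) (hJ0 (hg p)))
  obtain ⟨p, hp⟩ := hpos
  calc δ ≤ g p := hδ (g p) (hg p) hp
    _ ≤ ∑ q, g q := Finset.single_le_sum (fun q _ => hJ0 (hg q)) (Finset.mem_univ p)

/-- Accumulation points of the solution set of `2 = c·k + s₁ + s₂` (with `k` a
nonzero finite sum of elements of `J`, and `s₁`, `s₂` finite (possibly empty)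
sums of elements of `I₁`, `I₂`) are either `0` or solutions of the analogous
equation with data in the closures. -/
theorem accPt_dim_two_equation (I₁ I₂ J : Set ℝ) (h1 : I₁ ⊆ Set.Ici 0)
    (h2 : I₂ ⊆ Set.Ici 0) (hJ0 : J ⊆ Set.Ici 0)
    (hd1 : DCC I₁) (hd2 : DCC I₂) (hdJ : DCC J) (c : ℝ)
    (hc : IsAccPt c {t : ℝ | 0 ≤ t ∧ ∃ k ∈ finSums J, k ≠ 0 ∧
      ∃ s₁ ∈ ({0} ∪ finSums I₁ : Set ℝ), ∃ s₂ ∈ ({0} ∪ finSums I₂ : Set ℝ),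
        2 = t * k + s₁ + s₂}) :
    c = 0 ∨ ∃ k ∈ clSet {k ∈ finSums J | k ≠ 0}, 0 < k ∧
      ∃ s₁ ∈ clSet ({0} ∪ finSums I₁), ∃ s₂ ∈ clSet ({0} ∪ finSums I₂),
        2 = c * k + s₁ + s₂ := by
  by_cases hc0 : c = 0
  · exact Or.inl hc0
  right
  obtain ⟨δ, hδpos, hδ⟩ := exists_pos_lb_of_DCC hdJ
  -- c ≥ 0, hence c > 0
  have hcnn : 0 ≤ c := by
    by_contra hneg
    push_neg at hneg
    obtain ⟨y, hy, -, hyd⟩ := hc (-c) (by linarith)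
    have : 0 ≤ y := hy.1
    rw [abs_lt] at hyd
    linarith [hyd.2]
  have hcpos : 0 < c := lt_of_le_of_ne hcnn (Ne.symm hc0)
  -- choose a sequence t n → c of solutions
  have hseq : ∀ n : ℕ, ∃ t : ℝ, (0 ≤ t ∧ ∃ k ∈ finSums J, k ≠ 0 ∧
      ∃ s₁ ∈ ({0} ∪ finSums I₁ : Set ℝ), ∃ s₂ ∈ ({0} ∪ finSums I₂ : Set ℝ),
        2 = t * k + s₁ + s₂) ∧ |t - c| < 1 / (n + 1) := by
    intro n
    obtain ⟨y, hy, -, hyd⟩ := hc (1 / (n + 1)) (by positivity)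
    exact ⟨y, hy, hyd⟩
  choose t ht htd using hseq
  choose htnn k hkJ hk0 s₁ hs₁ s₂ hs₂ heq using ht
  have htc : Tendsto t atTop (nhds c) := by
    rw [tendsto_iff_dist_tendsto_zero]
    apply squeeze_zero (fun n => dist_nonneg) (fun n => le_of_lt ?_)
    · exact tendsto_one_div_add_atTop_nhds_zero_nat
    · simpa [Real.dist_eq] using htd n
  -- eventually t n > c/2
  have hev : ∀ᶠ n in atTop, c / 2 < t n :=
    htc.eventually (eventually_gt_nhds (by linarith))
  obtain ⟨N, hN⟩ := eventually_atTop.mp hev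
  -- bounds
  have hs₁nn : ∀ n, 0 ≤ s₁ n := fun n => sum_nonneg' h1 (hs₁ n)
  have hs₂nn : ∀ n, 0 ≤ s₂ n := fun n => sum_nonneg' h2 (hs₂ n)
  have hklb : ∀ n, δ ≤ k n := fun n => finSums_lb hJ0 hδ (hkJ n) (hk0 n)
  have hkub : ∀ n, N ≤ n → k n ≤ 4 / c := by
    intro n hn
    have h2n := heq n
    have htn := hN n hn
    have hkpos : 0 < k n := lt_of_lt_of_le hδpos (hklb n)
    have : t n * k n ≤ 2 := by nlinarith [hs₁nn n, hs₂nn n]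
    rw [le_div_iff₀ hcpos]
    nlinarith
  have hs₁ub : ∀ n, s₁ n ≤ 2 := by
    intro n
    have := heq n
    nlinarith [hs₂nn n, htnn n, hklb n, hδpos.le, mul_nonneg (htnn n) (le_trans hδpos.le (hklb n))]
  have hs₂ub : ∀ n, s₂ n ≤ 2 := by
    intro n
    have := heq n
    nlinarith [hs₁nn n, mul_nonneg (htnn n) (le_trans hδpos.le (hklb n))]
  -- compactness
  set x : ℕ → ℝ × ℝ × ℝ := fun m => (k (m + N), s₁ (m + N), s₂ (m + N)) with hx
  have hxmem : ∀ m, x m ∈ (Set.Icc δ (4 / c)) ×ˢ ((Set.Icc (0:ℝ) 2) ×ˢ (Set.Icc (0:ℝ) 2)) := by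
    intro m
    exact ⟨⟨hklb _, hkub _ (Nat.le_add_left N m)⟩, ⟨hs₁nn _, hs₁ub _⟩, ⟨hs₂nn _, hs₂ub _⟩⟩
  have hKcpt : IsCompact ((Set.Icc δ (4 / c)) ×ˢ ((Set.Icc (0:ℝ) 2) ×ˢ (Set.Icc (0:ℝ) 2))) :=
    isCompact_Icc.prod (isCompact_Icc.prod isCompact_Icc)
  obtain ⟨a, haK, φ, hφ, hlim⟩ := hKcpt.tendsto_subseq hxmem
  have hlimk : Tendsto (fun m => k (φ m + N)) atTop (nhds a.1) :=
    (continuous_fst.tendsto a).comp hlim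
  have hlims₁ : Tendsto (fun m => s₁ (φ m + N)) atTop (nhds a.2.1) :=
    ((continuous_fst.tendsto a.2).comp ((continuous_snd.tendsto a).comp hlim))
  have hlims₂ : Tendsto (fun m => s₂ (φ m + N)) atTop (nhds a.2.2) :=
    ((continuous_snd.tendsto a.2).comp ((continuous_snd.tendsto a).comp hlim))
  have hlimt : Tendsto (fun m => t (φ m + N)) atTop (nhds c) :=
    htc.comp (tendsto_atTop_mono (fun m => Nat.le_add_right (φ m) N) hφ.tendsto_atTop)
  have hsum : Tendsto (fun m => t (φ m + N) * k (φ m + N) + s₁ (φ m + N) + s₂ (φ m + N))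
      atTop (nhds (c * a.1 + a.2.1 + a.2.2)) :=
    ((hlimt.mul hlimk).add hlims₁).add hlims₂
  have heq2 : (2 : ℝ) = c * a.1 + a.2.1 + a.2.2 := by
    have hconst : Tendsto (fun _ : ℕ => (2 : ℝ)) atTop (nhds 2) := tendsto_const_nhds
    have : (fun m => t (φ m + N) * k (φ m + N) + s₁ (φ m + N) + s₂ (φ m + N))
        = fun _ : ℕ => (2 : ℝ) := funext fun m => (heq (φ m + N)).symm
    rw [this] at hsum
    exact tendsto_nhds_unique hconst hsum
  refine ⟨a.1, ?_, lt_of_lt_of_le hδpos haK.1.1, a.2.1, ?_, a.2.2, ?_, heq2⟩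
  · exact mem_clSet_of_tendsto_s19 (fun m => ⟨hkJ (φ m + N), hk0 (φ m + N)⟩) hlimk
  · exact mem_clSet_of_tendsto_s19 (fun m => hs₁ (φ m + N)) hlims₁
  · exact mem_clSet_of_tendsto_s19 (fun m => hs₂ (φ m + N)) hlims₂
end
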